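/- Let T be a bounded linear operator on H admitting an A-adjoint T♯. Then (w_A(T))² ≥ (1/2)·max{ ‖Re_A(T) + Im_A(T)‖_A², ‖Re_A(T) − Im_A(T)‖_A² } ≥ (1/4)·‖T♯T + TT♯‖_A. -/

import Mathlib

/-!
Write `A = R * R` with `R = A^{1/2}` selfadjoint, so that `⟨x, y⟩_A = ⟪R y, R x⟫`. Then
`U = Re_A T + Im_A T = c T + c̄ T♯` and `V = Re_A T - Im_A T = c̄ T + c T♯` with `c = (1 - i)/2`
are `A`-selfadjoint, and `⟨U x, x⟩_A = 2 Re (c ⟨T x, x⟩_A)` gives `w_A(U) ≤ √2 w_A(T)`; likewise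
for `V`. For `A`-selfadjoint operators polarization gives `‖·‖_A ≤ w_A(·)`, which yields the first
inequality. For the second, `T♯T + TT♯ = U² + V²` is `A`-selfadjoint and
`⟨(U² + V²) x, x⟩_A = ‖U x‖_A² + ‖V x‖_A²`.

The suprema defining `w_A` and `‖·‖_A` are finite because an `A`-selfadjoint `S` satisfies
`‖S x‖_A ≤ ‖S‖ ‖x‖_A`: the sequence `‖Sⁿ x‖_A` is log-convex, since
`‖Sⁿ⁺¹ x‖_A² = ⟨Sⁿ⁺² x, Sⁿ x⟩_A`, and grows at most like `‖S‖ⁿ`.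
-/

noncomputable section

open scoped ComplexInnerProductSpace

variable {H : Type*} [NormedAddCommGroup H] [InnerProductSpace ℂ H] [CompleteSpace H]

/-- The semi-inner product induced by a positive operator `A`:
`⟨x,y⟩_A = ⟨Ax,y⟩` (linear in the first argument, following the paper's convention). -/
def innerA (A : H →L[ℂ] H) (x y : H) : ℂ := ⟪y, A x⟫

/-- The seminorm induced by `A`: `‖x‖_A = ⟨Ax,x⟩^{1/2}`. -/
def normA (A : H →L[ℂ] H) (x : H) : ℝ := Real.sqrt (innerA A x x).re

/-- The `A`-numerical radius `w_A(T) = sup { |⟨Tx,x⟩_A| : ‖x‖_A = 1 }`. -/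
def wA (A T : H →L[ℂ] H) : ℝ :=
  sSup {r : ℝ | ∃ x : H, normA A x = 1 ∧ r = ‖innerA A (T x) x‖}

/-- The `A`-Crawford number `c_A(T) = inf { |⟨Tx,x⟩_A| : ‖x‖_A = 1 }`. -/
def cA (A T : H →L[ℂ] H) : ℝ :=
  sInf {r : ℝ | ∃ x : H, normA A x = 1 ∧ r = ‖innerA A (T x) x‖}

/-- The `A`-operator seminorm `‖T‖_A = sup { ‖Tx‖_A : ‖x‖_A = 1 }`. -/
def opNormA (A T : H →L[ℂ] H) : ℝ :=
  sSup {r : ℝ | ∃ x : H, normA A x = 1 ∧ r = normA A (T x)}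

/-- The `A`-Euclidean operator radius of the pair `(B, C)`. -/
def wAe (A B C : H →L[ℂ] H) : ℝ :=
  sSup {r : ℝ | ∃ x : H, normA A x = 1 ∧
    r = Real.sqrt ((‖innerA A (B x) x‖)^2 + (‖innerA A (C x) x‖)^2)}

/-- The `A`-Euclidean operator seminorm of the pair `(B, C)`. -/
def normAe (A B C : H →L[ℂ] H) : ℝ :=
  sSup {r : ℝ | ∃ x : H, normA A x = 1 ∧
    r = Real.sqrt ((normA A (B x))^2 + (normA A (C x))^2)}

/-- `Re_A(T) = (T + T♯)/2`, where `Ts` is an `A`-adjoint of `T`. -/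
def ReA (T Ts : H →L[ℂ] H) : H →L[ℂ] H := (2 : ℂ)⁻¹ • (T + Ts)

/-- `Im_A(T) = (T - T♯)/(2i)`, where `Ts` is an `A`-adjoint of `T`. -/
def ImA (T Ts : H →L[ℂ] H) : H →L[ℂ] H := (2 * Complex.I)⁻¹ • (T - Ts)

theorem le_of_forall_mul_pow_le_mul_pow {a q C K : ℝ} (ha : 0 < a) (hK : 0 ≤ K)
    (h : ∀ n : ℕ, a * q ^ n ≤ C * K ^ n) : q ≤ K := by
  by_contra! hKq
  obtain rfl | hK := hK.eq_or_lt
  · have := h 1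
    simp only [pow_one, mul_zero] at this
    nlinarith
  obtain ⟨n, hn⟩ := pow_unbounded_of_one_lt (C / a) ((one_lt_div hK).2 hKq)
  have := h n
  rw [div_pow, lt_div_iff₀ (pow_pos hK n), div_mul_eq_mul_div, div_lt_iff₀ ha] at hn
  linarith

-- A log-convex sequence grows at least geometrically with ratio `a 1 / a 0`.
theorem le_mul_of_sq_le_mul_of_le_geometric {a : ℕ → ℝ} {C K : ℝ} (ha : ∀ n, 0 ≤ a n)
    (hconv : ∀ n, a (n + 1) ^ 2 ≤ a n * a (n + 2)) (hK : 0 ≤ K) (hbound : ∀ n, a n ≤ C * K ^ n) :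
    a 1 ≤ K * a 0 := by
  have hratio : ∀ n, a 1 * a n ≤ a 0 * a (n + 1) := by
    intro n
    induction n with
    | zero => rw [mul_comm]
    | succ n ih =>
      obtain hn | hn := (ha n).eq_or_lt
      · have hsq := hconv n
        rw [← hn, zero_mul] at hsq
        rw [pow_eq_zero_iff two_ne_zero |>.1 (hsq.antisymm (sq_nonneg _)), mul_zero]
        exact mul_nonneg (ha 0) (ha _)
      · refine le_of_mul_le_mul_left ?_ hn
        calc a n * (a 1 * a (n + 1)) = a 1 * a n * a (n + 1) := by ring
          _ ≤ a 0 * a (n + 1) * a (n + 1) := mul_le_mul_of_nonneg_right ih (ha _)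
          _ = a 0 * a (n + 1) ^ 2 := by ring
          _ ≤ a 0 * (a n * a (n + 2)) := mul_le_mul_of_nonneg_left (hconv n) (ha 0)
          _ = a n * (a 0 * a (n + 1 + 1)) := by ring
  obtain h0 | h0 := (ha 0).eq_or_lt
  · have : a 1 = 0 := by nlinarith [hconv 0, ha 1, ha 2]
    rw [this, ← h0, mul_zero]
  have hgrowth : ∀ n, a 0 * (a 1 / a 0) ^ n ≤ a n := by
    intro n
    induction n with
    | zero => simp
    | succ n ih =>
      rw [pow_succ, ← mul_assoc]
      calc a 0 * (a 1 / a 0) ^ n * (a 1 / a 0) ≤ a n * (a 1 / a 0) :=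
            mul_le_mul_of_nonneg_right ih (div_nonneg (ha 1) h0.le)
        _ ≤ a (n + 1) := by
            rw [mul_div_assoc', div_le_iff₀ h0, mul_comm (a n)]
            linarith [hratio n]
  have := le_of_forall_mul_pow_le_mul_pow h0 hK fun n => (hgrowth n).trans (hbound n)
  rwa [div_le_iff₀ h0] at this

open ContinuousLinearMap
open scoped InnerProductSpace

section AdjointPair

variable {𝕜 E F : Type*} [RCLike 𝕜] [SeminormedAddCommGroup E] [InnerProductSpace 𝕜 E]
  [SeminormedAddCommGroup F] [InnerProductSpace 𝕜 F]

-- With `A = R * R`, the paper's `⟨x, y⟩_A` is `⟪R y, R x⟫`, so this says that `S` is an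
-- `A`-adjoint of `T`.
def IsAdjointPairVia (R : E →L[𝕜] F) (T S : E →L[𝕜] E) : Prop :=
  ∀ x y, ⟪R (T x), R y⟫_𝕜 = ⟪R x, R (S y)⟫_𝕜

namespace IsAdjointPairVia

variable {R : E →L[𝕜] F} {T S T' S' : E →L[𝕜] E}

theorem symm (h : IsAdjointPairVia R T S) : IsAdjointPairVia R S T := fun x y => by
  rw [← inner_conj_symm, ← h y x, inner_conj_symm]

theorem add (h : IsAdjointPairVia R T S) (h' : IsAdjointPairVia R T' S') :
    IsAdjointPairVia R (T + T') (S + S') := fun x y => by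
  simp only [add_apply, map_add, inner_add_left, inner_add_right, h x y, h' x y]

theorem smul (h : IsAdjointPairVia R T S) (c : 𝕜) :
    IsAdjointPairVia R (c • T) (starRingEnd 𝕜 c • S) := fun x y => by
  simp only [smul_apply, map_smul, inner_smul_left, inner_smul_right, h x y]

theorem mul (h : IsAdjointPairVia R T S) (h' : IsAdjointPairVia R T' S') :
    IsAdjointPairVia R (T' * T) (S * S') := fun x y => by
  rw [mul_apply_eq_comp, mul_apply_eq_comp, h', h]

theorem inner_map_map_self (h : IsAdjointPairVia R T T) (x : E) :
    ⟪R x, R (T (T x))⟫_𝕜 = (‖R (T x)‖ ^ 2 : ℝ) := by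
  rw [← h, inner_self_eq_norm_sq_to_K, RCLike.ofReal_pow]

-- `n ↦ ‖R (T^[n] x)‖` is log-convex and grows at most like `‖T‖ ^ n`.
theorem norm_map_apply_le (h : IsAdjointPairVia R T T) (x : E) : ‖R (T x)‖ ≤ ‖T‖ * ‖R x‖ := by
  set a : ℕ → ℝ := fun n => ‖R (T^[n] x)‖
  have hconv : ∀ n, a (n + 1) ^ 2 ≤ a n * a (n + 2) := fun n => by
    have key := h.inner_map_map_self (T^[n] x)
    rw [← Function.iterate_succ_apply' T, ← Function.iterate_succ_apply' T] at key
    calc a (n + 1) ^ 2 = ‖⟪R (T^[n] x), R (T^[n + 2] x)⟫_𝕜‖ := by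
          rw [key, RCLike.norm_ofReal, abs_of_nonneg (sq_nonneg _)]
      _ ≤ a n * a (n + 2) := norm_inner_le_norm _ _
  have hbound : ∀ n, a n ≤ ‖R‖ * ‖x‖ * ‖T‖ ^ n := fun n => by
    have hiter : ‖T^[n] x‖ ≤ ‖T‖ ^ n * ‖x‖ := by
      induction n with
      | zero => simp
      | succ n ih =>
        rw [Function.iterate_succ_apply', pow_succ', mul_assoc]
        exact (T.le_opNorm _).trans (mul_le_mul_of_nonneg_left ih (norm_nonneg T))
    calc a n ≤ ‖R‖ * (‖T‖ ^ n * ‖x‖) :=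
          (R.le_opNorm _).trans (mul_le_mul_of_nonneg_left hiter (norm_nonneg R))
      _ = ‖R‖ * ‖x‖ * ‖T‖ ^ n := by ring
  exact le_mul_of_sq_le_mul_of_le_geometric (fun n => norm_nonneg _) hconv (norm_nonneg T) hbound

theorem exists_norm_map_apply_le (h : IsAdjointPairVia R T S) :
    ∃ C, ∀ x, ‖R (T x)‖ ≤ C * ‖R x‖ := by
  refine ⟨√‖S * T‖, fun x => ?_⟩
  have hsq : ‖R (T x)‖ ^ 2 ≤ (√‖S * T‖ * ‖R x‖) ^ 2 := by
    calc ‖R (T x)‖ ^ 2 = RCLike.re ⟪R x, R (S (T x))⟫_𝕜 := by rw [← h, inner_self_eq_norm_sq]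
      _ ≤ ‖R x‖ * ‖R ((S * T) x)‖ := (RCLike.re_le_norm _).trans (norm_inner_le_norm _ _)
      _ ≤ ‖R x‖ * (‖S * T‖ * ‖R x‖) :=
          mul_le_mul_of_nonneg_left ((h.mul h.symm).norm_map_apply_le x) (norm_nonneg _)
      _ = (√‖S * T‖ * ‖R x‖) ^ 2 := by rw [mul_pow, Real.sq_sqrt (norm_nonneg _)]; ring
  exact (pow_le_pow_iff_left₀ (norm_nonneg _) (by positivity) two_ne_zero).1 hsq

-- Polarization against `y = T x / ‖R (T x)‖`, then the parallelogram law.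
theorem norm_map_apply_le_of_norm_inner_le (h : IsAdjointPairVia R T T) {w : ℝ}
    (hw : ∀ z, ‖⟪R z, R (T z)⟫_𝕜‖ ≤ w * ‖R z‖ ^ 2) {x : E} (hx : ‖R x‖ = 1) :
    ‖R (T x)‖ ≤ w := by
  set m := ‖R (T x)‖
  obtain hm | hm := (norm_nonneg (R (T x))).eq_or_lt
  · calc m = 0 := hm.symm
      _ ≤ w := by simpa [hx] using (norm_nonneg _).trans (hw x)
  set y : E := ((m⁻¹ : ℝ) : 𝕜) • T x
  have hy : ‖R y‖ = 1 := by
    simp [y, norm_smul, m, hm.ne']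
  have hyx : ⟪R y, R (T x)⟫_𝕜 = m := by
    rw [map_smul, inner_smul_left, inner_self_eq_norm_sq_to_K, RCLike.conj_ofReal]
    have hm' : (m : 𝕜) ≠ 0 := RCLike.ofReal_ne_zero.2 hm.ne'
    change ((m⁻¹ : ℝ) : 𝕜) * (m : 𝕜) ^ 2 = m
    rw [RCLike.ofReal_inv, sq, ← mul_assoc, inv_mul_cancel₀ hm', one_mul]
  have hxy : ⟪R x, R (T y)⟫_𝕜 = m := by
    rw [← h, ← inner_conj_symm, hyx, RCLike.conj_ofReal]
  have hpolar : 4 * m =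
      RCLike.re ⟪R (x + y), R (T (x + y))⟫_𝕜 - RCLike.re ⟪R (x - y), R (T (x - y))⟫_𝕜 := by
    simp only [map_add, map_sub, inner_add_left, inner_add_right, inner_sub_left,
      inner_sub_right, hyx, hxy, RCLike.ofReal_re]
    ring
  have hpar := parallelogram_law_with_norm 𝕜 (R x) (R y)
  rw [hx, hy, ← map_add, ← map_sub] at hpar
  have h1 := (RCLike.re_le_norm _).trans (hw (x + y))
  have h2 := ((neg_le_abs _).trans (RCLike.abs_re_le_norm _)).trans (hw (x - y))
  nlinarith

theorem smul_add_conj_smul (h : IsAdjointPairVia R T S) (d : 𝕜) :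
    IsAdjointPairVia R (d • T + starRingEnd 𝕜 d • S) (d • T + starRingEnd 𝕜 d • S) := by
  have := (h.smul d).add (h.symm.smul (starRingEnd 𝕜 d))
  rwa [RCLike.conj_conj, add_comm (_ • S)] at this

end IsAdjointPairVia

end AdjointPair

section SemiInnerProduct

variable {E : Type*} [NormedAddCommGroup E] [InnerProductSpace ℂ E] {R T S U V : E →L[ℂ] E}

theorem isAdjointPairVia_of_comp_eq [CompleteSpace E] (hR : (R : E →ₗ[ℂ] E).IsSymmetric)
    (h : (R * R).comp S = (adjoint T).comp (R * R)) : IsAdjointPairVia R T S := fun x y =>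
  calc ⟪R (T x), R y⟫ = ⟪T x, R (R y)⟫ := hR.apply_clm _ _
    _ = ⟪x, adjoint T (R (R y))⟫ := (adjoint_inner_right T x _).symm
    _ = ⟪x, R (R (S y))⟫ := congrArg _ (DFunLike.congr_fun h y).symm
    _ = ⟪R x, R (S y)⟫ := (hR.apply_clm _ _).symm

theorem innerA_mul_self (hR : (R : E →ₗ[ℂ] E).IsSymmetric) (x y : E) :
    innerA (R * R) x y = ⟪R y, R x⟫ :=
  (hR.apply_clm y (R x)).symm

theorem normA_mul_self (hR : (R : E →ₗ[ℂ] E).IsSymmetric) (x : E) : normA (R * R) x = ‖R x‖ := by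
  rw [normA, innerA_mul_self hR]
  exact (congrArg Real.sqrt (inner_self_eq_norm_sq (𝕜 := ℂ) (R x))).trans
    (Real.sqrt_sq (norm_nonneg _))

theorem wA_nonneg (A T : E →L[ℂ] E) : 0 ≤ wA A T :=
  Real.sSup_nonneg <| by rintro _ ⟨x, -, rfl⟩; exact norm_nonneg _

theorem opNormA_nonneg (A T : E →L[ℂ] E) : 0 ≤ opNormA A T :=
  Real.sSup_nonneg <| by rintro _ ⟨x, -, rfl⟩; exact Real.sqrt_nonneg _

theorem wA_mul_self_le (hR : (R : E →ₗ[ℂ] E).IsSymmetric) {w : ℝ} (hw : 0 ≤ w)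
    (h : ∀ x, ‖R x‖ = 1 → ‖⟪R x, R (T x)⟫‖ ≤ w) : wA (R * R) T ≤ w := by
  refine Real.sSup_le ?_ hw
  rintro _ ⟨x, hx, rfl⟩
  rw [normA_mul_self hR] at hx
  rw [innerA_mul_self hR]
  exact h x hx

theorem opNormA_mul_self_le (hR : (R : E →ₗ[ℂ] E).IsSymmetric) {w : ℝ} (hw : 0 ≤ w)
    (h : ∀ x, ‖R x‖ = 1 → ‖R (T x)‖ ≤ w) : opNormA (R * R) T ≤ w := by
  refine Real.sSup_le ?_ hw
  rintro _ ⟨x, hx, rfl⟩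
  rw [normA_mul_self hR] at hx ⊢
  exact h x hx

theorem norm_map_le_opNormA_mul_self (hR : (R : E →ₗ[ℂ] E).IsSymmetric) {C : ℝ}
    (hT : ∀ x, ‖R (T x)‖ ≤ C * ‖R x‖) {x : E} (hx : ‖R x‖ = 1) :
    ‖R (T x)‖ ≤ opNormA (R * R) T := by
  refine le_csSup ⟨C, ?_⟩ ⟨x, by rwa [normA_mul_self hR], by rw [normA_mul_self hR]⟩
  rintro _ ⟨y, hy, rfl⟩
  rw [normA_mul_self hR] at hy ⊢
  simpa [hy] using hT y

theorem norm_inner_le_wA_mul_self_mul (hR : (R : E →ₗ[ℂ] E).IsSymmetric) {C : ℝ}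
    (hT : ∀ x, ‖R (T x)‖ ≤ C * ‖R x‖) (z : E) :
    ‖⟪R z, R (T z)⟫‖ ≤ wA (R * R) T * ‖R z‖ ^ 2 := by
  have hbdd : BddAbove {r | ∃ x, normA (R * R) x = 1 ∧ r = ‖innerA (R * R) (T x) x‖} := by
    refine ⟨C, ?_⟩
    rintro _ ⟨x, hx, rfl⟩
    rw [normA_mul_self hR] at hx
    rw [innerA_mul_self hR]
    simpa [hx] using (norm_inner_le_norm (𝕜 := ℂ) (R x) _).trans
      (mul_le_mul_of_nonneg_left (hT x) (norm_nonneg _))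
  obtain hz | hz := (norm_nonneg (R z)).eq_or_lt
  · calc ‖⟪R z, R (T z)⟫‖ ≤ ‖R z‖ * ‖R (T z)‖ := norm_inner_le_norm _ _
      _ = wA (R * R) T * ‖R z‖ ^ 2 := by rw [← hz]; ring
  set u : E := ((‖R z‖⁻¹ : ℝ) : ℂ) • z
  have hu : ‖R u‖ = 1 := by simp [u, norm_smul, hz.ne']
  have hle : ‖innerA (R * R) (T u) u‖ ≤ wA (R * R) T :=
    le_csSup hbdd ⟨u, by rw [normA_mul_self hR, hu], rfl⟩
  rw [innerA_mul_self hR] at hle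
  simp only [u, map_smul, inner_smul_left, inner_smul_right, norm_mul, Complex.conj_ofReal,
    Complex.norm_real, norm_inv, norm_norm] at hle
  calc ‖⟪R z, R (T z)⟫‖ = ‖R z‖⁻¹ * (‖R z‖⁻¹ * ‖⟪R z, R (T z)⟫‖) * ‖R z‖ ^ 2 := by
        field_simp
    _ ≤ wA (R * R) T * ‖R z‖ ^ 2 := by gcongr

theorem IsAdjointPairVia.opNormA_mul_self_le_wA (hR : (R : E →ₗ[ℂ] E).IsSymmetric)
    (h : IsAdjointPairVia R T T) : opNormA (R * R) T ≤ wA (R * R) T :=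
  opNormA_mul_self_le hR (wA_nonneg _ _) fun _ hx =>
    h.norm_map_apply_le_of_norm_inner_le (norm_inner_le_wA_mul_self_mul hR h.norm_map_apply_le) hx

theorem IsAdjointPairVia.wA_mul_self_smul_add_conj_smul_le (hR : (R : E →ₗ[ℂ] E).IsSymmetric)
    (h : IsAdjointPairVia R T S) (d : ℂ) :
    wA (R * R) (d • T + starRingEnd ℂ d • S) ≤ 2 * ‖d‖ * wA (R * R) T := by
  obtain ⟨C, hC⟩ := h.exists_norm_map_apply_le
  have := wA_nonneg (R * R) T
  refine wA_mul_self_le hR (by positivity) fun x hx => ?_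
  have hTx : ‖⟪R x, R (T x)⟫‖ ≤ wA (R * R) T := by
    simpa [hx] using norm_inner_le_wA_mul_self_mul hR hC x
  have hSx : ⟪R x, R (S x)⟫ = starRingEnd ℂ ⟪R x, R (T x)⟫ := by rw [← h, inner_conj_symm]
  calc ‖⟪R x, R ((d • T + starRingEnd ℂ d • S) x)⟫‖
      = ‖d * ⟪R x, R (T x)⟫ + starRingEnd ℂ (d * ⟪R x, R (T x)⟫)‖ := by
        simp only [add_apply, smul_apply, map_add, map_smul, inner_add_right, inner_smul_right, hSx,
          map_mul]
    _ ≤ ‖d * ⟪R x, R (T x)⟫‖ + ‖starRingEnd ℂ (d * ⟪R x, R (T x)⟫)‖ := norm_add_le _ _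
    _ = 2 * ‖d‖ * ‖⟪R x, R (T x)⟫‖ := by rw [RCLike.norm_conj, norm_mul]; ring
    _ ≤ 2 * ‖d‖ * wA (R * R) T := by gcongr

theorem IsAdjointPairVia.opNormA_mul_self_smul_add_conj_smul_sq_le
    (hR : (R : E →ₗ[ℂ] E).IsSymmetric) (h : IsAdjointPairVia R T S) {d : ℂ}
    (hd : ‖d‖ ^ 2 = 2⁻¹) :
    opNormA (R * R) (d • T + starRingEnd ℂ d • S) ^ 2 ≤ 2 * wA (R * R) T ^ 2 :=
  calc _ ≤ (2 * ‖d‖ * wA (R * R) T) ^ 2 := by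
        gcongr
        · exact opNormA_nonneg _ _
        · exact ((h.smul_add_conj_smul d).opNormA_mul_self_le_wA hR).trans
            (h.wA_mul_self_smul_add_conj_smul_le hR d)
    _ = 2 * wA (R * R) T ^ 2 := by rw [mul_pow, mul_pow, hd]; ring

theorem opNormA_mul_self_mul_self_add_mul_self_le (hR : (R : E →ₗ[ℂ] E).IsSymmetric)
    (hU : IsAdjointPairVia R U U) (hV : IsAdjointPairVia R V V) :
    opNormA (R * R) (U * U + V * V) ≤ opNormA (R * R) U ^ 2 + opNormA (R * R) V ^ 2 := by
  refine (((hU.mul hU).add (hV.mul hV)).opNormA_mul_self_le_wA hR).trans <|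
    wA_mul_self_le hR (by positivity) fun x hx => ?_
  have hsum : ⟪R x, R ((U * U + V * V) x)⟫ = ((‖R (U x)‖ ^ 2 + ‖R (V x)‖ ^ 2 : ℝ) : ℂ) := by
    rw [add_apply, mul_apply_eq_comp, mul_apply_eq_comp, map_add, inner_add_right,
      hU.inner_map_map_self, hV.inner_map_map_self]
    push_cast
    rfl
  rw [hsum, Complex.norm_real, Real.norm_of_nonneg (by positivity)]
  gcongr
  · exact norm_map_le_opNormA_mul_self hR hU.norm_map_apply_le hx
  · exact norm_map_le_opNormA_mul_self hR hV.norm_map_apply_le hx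

end SemiInnerProduct

section Cartesian

variable {E : Type*} [NormedAddCommGroup E] [InnerProductSpace ℂ E] (T Ts : E →L[ℂ] E)

theorem ReA_add_ImA : ReA T Ts + ImA T Ts =
    ((1 - Complex.I) / 2 : ℂ) • T + starRingEnd ℂ ((1 - Complex.I) / 2) • Ts := by
  have hI : (2 * Complex.I)⁻¹ = -Complex.I / 2 := by field_simp; simp
  simp only [ReA, ImA, hI, map_div₀, map_sub, map_one, Complex.conj_I, map_ofNat]
  module

theorem ReA_sub_ImA : ReA T Ts - ImA T Ts =
    ((1 + Complex.I) / 2 : ℂ) • T + starRingEnd ℂ ((1 + Complex.I) / 2) • Ts := by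
  have hI : (2 * Complex.I)⁻¹ = -Complex.I / 2 := by field_simp; simp
  simp only [ReA, ImA, hI, map_div₀, map_add, map_one, Complex.conj_I, map_ofNat]
  module

theorem ReA_add_ImA_mul_self_add_ReA_sub_ImA_mul_self :
    (ReA T Ts + ImA T Ts) * (ReA T Ts + ImA T Ts) + (ReA T Ts - ImA T Ts) * (ReA T Ts - ImA T Ts) =
      Ts * T + T * Ts := by
  have hI : (2 * Complex.I)⁻¹ * (2 * Complex.I)⁻¹ = -(2⁻¹ * 2⁻¹ : ℂ) := by
    field_simp; simp
  simp only [ReA, ImA, add_mul, mul_add, sub_mul, mul_sub, smul_mul_smul_comm, hI]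
  module

end Cartesian

theorem stmt19_general (A : H →L[ℂ] H) (hA : A.IsPositive)
    (T Ts : H →L[ℂ] H)
    (hT : A.comp Ts = (ContinuousLinearMap.adjoint T).comp A) :
    (1/2) * max ((opNormA A (ReA T Ts + ImA T Ts))^2)
        ((opNormA A (ReA T Ts - ImA T Ts))^2) ≤ (wA A T)^2
      ∧ (1/4) * opNormA A (Ts * T + T * Ts)
          ≤ (1/2) * max ((opNormA A (ReA T Ts + ImA T Ts))^2)
              ((opNormA A (ReA T Ts - ImA T Ts))^2) := by
  obtain ⟨R, hR, rfl⟩ : ∃ R : H →L[ℂ] H, IsSelfAdjoint R ∧ A = R * R :=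
    ⟨CFC.sqrt A, .of_nonneg (CFC.sqrt_nonneg A),
      (CFC.sqrt_mul_sqrt_self A ((nonneg_iff_isPositive A).2 hA)).symm⟩
  have hRs := hR.isSymmetric
  have hTTs := isAdjointPairVia_of_comp_eq hRs hT
  have hc : ‖(1 - Complex.I) / 2‖ ^ 2 = 2⁻¹ ∧ ‖(1 + Complex.I) / 2‖ ^ 2 = 2⁻¹ := by
    simp only [← Complex.normSq_eq_norm_sq, Complex.normSq_apply]
    norm_num
  have hU := hTTs.opNormA_mul_self_smul_add_conj_smul_sq_le hRs hc.1
  have hV := hTTs.opNormA_mul_self_smul_add_conj_smul_sq_le hRs hc.2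
  have hUU := hTTs.smul_add_conj_smul ((1 - Complex.I) / 2)
  have hVV := hTTs.smul_add_conj_smul ((1 + Complex.I) / 2)
  rw [← ReA_add_ImA] at hU hUU
  rw [← ReA_sub_ImA] at hV hVV
  have hD := opNormA_mul_self_mul_self_add_mul_self_le hRs hUU hVV
  rw [ReA_add_ImA_mul_self_add_ReA_sub_ImA_mul_self] at hD
  set a := opNormA (R * R) (ReA T Ts + ImA T Ts) ^ 2
  set b := opNormA (R * R) (ReA T Ts - ImA T Ts) ^ 2
  constructor <;> linarith [max_le hU hV, le_max_left a b, le_max_right a b]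

theorem stmt19 (A : H →L[ℂ] H) (hA : A.IsPositive) (hA0 : A ≠ 0)
    (T Ts : H →L[ℂ] H)
    (hT : A.comp Ts = (ContinuousLinearMap.adjoint T).comp A) :
    (1/2) * max ((opNormA A (ReA T Ts + ImA T Ts))^2)
        ((opNormA A (ReA T Ts - ImA T Ts))^2) ≤ (wA A T)^2
      ∧ (1/4) * opNormA A (Ts * T + T * Ts)
          ≤ (1/2) * max ((opNormA A (ReA T Ts + ImA T Ts))^2)
              ((opNormA A (ReA T Ts - ImA T Ts))^2) :=
  stmt19_general A hA T Ts hT
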